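/- arXiv:2408.13493 — 2 statements merged into one kernel-verified Lean document; each statement's English description precedes it below -/
import Mathlib

section
/- Under the same setting, f₂(x⁺) ≥ f₂(x) + (α/2) sin²(Δ + φ) ‖∇f₂(x)‖² whenever α ≤ 1/L; hence the currently optimized objective strictly increases unless ∇f₂(x) = 0 or Δ + φ = π. -/
/-!
The step `u` is chosen so that `⟪∇f₂(x), u⟫ = ‖u‖² = sin²(Δ + φ) ‖∇f₂(x)‖²`. For a function with
`L`-Lipschitz gradient, `f(x + v) ≥ f(x) + ⟪∇f(x), v⟫ - (L/2) ‖v‖²`; with `v = α u` and `α L ≤ 1`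
this gives a gain of at least `(α/2) ‖u‖²`, which is positive unless `∇f₂(x) = 0` or
`sin (Δ + φ) = 0`, and in the admissible range of angles the latter means `Δ + φ = π`.
-/

open Real RealInnerProductSpace InnerProductGeometry

section Hypercone

variable {F : Type*} [NormedAddCommGroup F] [InnerProductSpace ℝ F]

/-- The projection of `b` onto the boundary of the cone of half-angle `Δ` around `a`, when
`b` lies outside that cone; this is the paper's `u` for `a = ∇f₁(x)`, `b = ∇f₂(x)`. -/
noncomputable def hyperconeProj (Δ : ℝ) (a b : F) : F :=
  ((cos Δ / sin (angle a b)) * sin (Δ + angle a b)) •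
    (b + ((‖b‖ / ‖a‖) * (sin (angle a b) * tan Δ - cos (angle a b))) • a)

variable {Δ : ℝ} {a b : F}

theorem inner_hyperconeProj (ha : a ≠ 0) (hΔ : cos Δ ≠ 0) (hφ : sin (angle a b) ≠ 0) :
    ⟪b, hyperconeProj Δ a b⟫ = sin (Δ + angle a b) ^ 2 * ‖b‖ ^ 2 := by
  have ha' : ‖a‖ ≠ 0 := norm_ne_zero_iff.2 ha
  have hba : ⟪b, a⟫ = cos (angle a b) * (‖a‖ * ‖b‖) := by
    rw [real_inner_comm, cos_angle_mul_norm_mul_norm]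
  rw [hyperconeProj, inner_smul_right, inner_add_right, inner_smul_right,
    real_inner_self_eq_norm_sq, hba, sin_add, tan_eq_sin_div_cos]
  field_simp
  linear_combination
    -(sin Δ * cos (angle a b) + cos Δ * sin (angle a b)) * ‖b‖ ^ 2 * cos Δ *
      sin_sq_add_cos_sq (angle a b)

theorem norm_sq_hyperconeProj (ha : a ≠ 0) (hΔ : cos Δ ≠ 0) (hφ : sin (angle a b) ≠ 0) :
    ‖hyperconeProj Δ a b‖ ^ 2 = sin (Δ + angle a b) ^ 2 * ‖b‖ ^ 2 := by
  have ha' : ‖a‖ ≠ 0 := norm_ne_zero_iff.2 ha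
  have hab : ⟪a, b⟫ = cos (angle a b) * (‖a‖ * ‖b‖) := (cos_angle_mul_norm_mul_norm a b).symm
  rw [hyperconeProj, norm_smul, mul_pow, Real.norm_eq_abs, sq_abs,
    ← real_inner_self_eq_norm_sq (_ + _), inner_add_add_self, real_inner_smul_left,
    real_inner_smul_right, real_inner_smul_left, real_inner_smul_right, real_inner_comm a b, hab,
    real_inner_self_eq_norm_sq, real_inner_self_eq_norm_sq, sin_add, tan_eq_sin_div_cos]
  field_simp
  linear_combination (sin Δ * cos (angle a b) + cos Δ * sin (angle a b)) ^ 2 * ‖b‖ ^ 2 *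
    (sin (angle a b) ^ 2 * sin_sq_add_cos_sq Δ - cos Δ ^ 2 * sin_sq_add_cos_sq (angle a b))

end Hypercone

section Smooth

variable {F : Type*} [NormedAddCommGroup F] [InnerProductSpace ℝ F] [CompleteSpace F]
  {f : F → ℝ} {L : ℝ} {x v : F}

theorem hasDerivAt_apply_add_smul {t : ℝ} (hf : DifferentiableAt ℝ f (x + t • v)) :
    HasDerivAt (fun s : ℝ => f (x + s • v)) ⟪gradient f (x + t • v), v⟫ t := by
  have hline : HasDerivAt (fun s : ℝ => x + s • v) v t := by
    simpa using ((hasDerivAt_id t).smul_const v).const_add x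
  exact (hf.hasGradientAt.hasFDerivAt.comp_hasDerivAt t hline).congr_deriv
    (InnerProductSpace.toDual_apply_apply ..)

theorem le_apply_add_of_lipschitz_gradient (hf : Differentiable ℝ f)
    (hLip : ∀ y z, ‖gradient f y - gradient f z‖ ≤ L * ‖y - z‖) (x v : F) :
    f x + ⟪gradient f x, v⟫ - L / 2 * ‖v‖ ^ 2 ≤ f (x + v) := by
  set h : ℝ → ℝ := fun t => f (x + t • v) - t * ⟪gradient f x, v⟫ + L / 2 * t ^ 2 * ‖v‖ ^ 2
  have hderiv (t : ℝ) : HasDerivAt h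
      (⟪gradient f (x + t • v) - gradient f x, v⟫ + L * t * ‖v‖ ^ 2) t := by
    have hq : HasDerivAt (fun t : ℝ => L / 2 * t ^ 2 * ‖v‖ ^ 2) (L * t * ‖v‖ ^ 2) t :=
      (((hasDerivAt_pow 2 t).const_mul (L / 2)).mul_const _).congr_deriv (by push_cast; ring)
    exact (((hasDerivAt_apply_add_smul (hf _)).sub
      ((hasDerivAt_id t).mul_const ⟪gradient f x, v⟫)).add hq).congr_deriv
        (by rw [inner_sub_left, one_mul])
  have hmono : MonotoneOn h (Set.Icc 0 1) := by
    refine monotoneOn_of_deriv_nonneg (convex_Icc 0 1)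
      (HasDerivAt.continuousOn fun t _ => hderiv t)
      (fun t _ => (hderiv t).differentiableAt.differentiableWithinAt) fun t ht => ?_
    rw [interior_Icc] at ht
    have hgrad : ‖gradient f (x + t • v) - gradient f x‖ ≤ L * t * ‖v‖ := by
      simpa [norm_smul, abs_of_pos ht.1, mul_assoc] using hLip (x + t • v) x
    have hinner :=
      (abs_le.1 (abs_real_inner_le_norm (gradient f (x + t • v) - gradient f x) v)).1
    rw [(hderiv t).deriv]
    nlinarith [mul_le_mul_of_nonneg_right hgrad (norm_nonneg v)]
  have := hmono (Set.left_mem_Icc.2 zero_le_one) (Set.right_mem_Icc.2 zero_le_one) zero_le_one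
  simp only [h, zero_smul, add_zero, one_smul, zero_mul, sub_zero, one_pow, mul_one] at this
  linarith

theorem le_apply_add_smul_of_inner_eq_norm_sq (hL : 0 < L) (hf : Differentiable ℝ f)
    (hLip : ∀ y z, ‖gradient f y - gradient f z‖ ≤ L * ‖y - z‖) {u : F}
    (hu : ⟪gradient f x, u⟫ = ‖u‖ ^ 2) {α : ℝ} (hα0 : 0 ≤ α) (hα : α ≤ 1 / L) :
    f x + α / 2 * ‖u‖ ^ 2 ≤ f (x + α • u) := by
  have hbound := le_apply_add_of_lipschitz_gradient hf hLip x (α • u)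
  rw [real_inner_smul_right, hu, norm_smul, mul_pow, Real.norm_eq_abs, sq_abs] at hbound
  have hLα : L * α ≤ 1 := by rwa [le_div_iff₀ hL, mul_comm] at hα
  nlinarith [mul_nonneg hα0 (sq_nonneg ‖u‖)]

end Smooth

theorem cone_step_increases_f2_general {n : ℕ} (f₁ f₂ : EuclideanSpace ℝ (Fin n) → ℝ)
    (L Δ φ α : ℝ) (x u : EuclideanSpace ℝ (Fin n))
    (hdiff₂ : Differentiable ℝ f₂)
    (hL₂ : ∀ y z : EuclideanSpace ℝ (Fin n), ‖gradient f₂ y - gradient f₂ z‖ ≤ L * ‖y - z‖)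
    (hLpos : 0 < L)
    (hg₁ : gradient f₁ x ≠ 0) (hg₂ : gradient f₂ x ≠ 0)
    (hΔ0 : 0 < Δ) (hΔ1 : Δ < π / 2)
    (hφ : φ = angle (gradient f₁ x) (gradient f₂ x))
    (hφ1 : π / 2 - Δ < φ) (hφ2 : φ < π)
    (hu : u = ((Real.cos Δ / Real.sin φ) * Real.sin (Δ + φ)) •
      (gradient f₂ x + ((‖gradient f₂ x‖ / ‖gradient f₁ x‖) *
        (Real.sin φ * Real.tan Δ - Real.cos φ)) • gradient f₁ x))
    (hα0 : 0 ≤ α) (hα : α ≤ 1 / L) :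
    f₂ (x + α • u) ≥ f₂ x + α / 2 * Real.sin (Δ + φ) ^ 2 * ‖gradient f₂ x‖ ^ 2 ∧
    (0 < α → Δ + φ ≠ π → f₂ (x + α • u) > f₂ x) := by
  subst hφ
  obtain rfl : u = hyperconeProj Δ (gradient f₁ x) (gradient f₂ x) := hu
  have hcosΔ : cos Δ ≠ 0 := (cos_pos_of_mem_Ioo ⟨by linarith, hΔ1⟩).ne'
  have hsinφ : sin (angle (gradient f₁ x) (gradient f₂ x)) ≠ 0 :=
    (sin_pos_of_pos_of_lt_pi (by linarith) hφ2).ne'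
  have hnorm := norm_sq_hyperconeProj hg₁ hcosΔ hsinφ
  have hgain := le_apply_add_smul_of_inner_eq_norm_sq hLpos hdiff₂ hL₂
    ((inner_hyperconeProj hg₁ hcosΔ hsinφ).trans hnorm.symm) hα0 hα
  rw [hnorm] at hgain
  refine ⟨by linarith, fun hαpos hne => ?_⟩
  have hsin : sin (Δ + angle (gradient f₁ x) (gradient f₂ x)) ≠ 0 := by
    rw [← neg_ne_zero, ← sin_sub_pi, Ne,
      sin_eq_zero_iff_of_lt_of_lt (by linarith [pi_pos]) (by linarith)]
    exact sub_ne_zero.2 hne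
  have : 0 < ‖gradient f₂ x‖ := norm_pos_iff.2 hg₂
  have : 0 < sin (Δ + angle (gradient f₁ x) (gradient f₂ x)) ^ 2 * ‖gradient f₂ x‖ ^ 2 := by
    positivity
  nlinarith

/-- Taking a step along the hypercone projection `u` of `∇f₂(x)` increases `f₂`:
`f₂(x⁺) ≥ f₂(x) + (α/2) sin²(Δ+φ)‖∇f₂(x)‖²` for `α ≤ 1/L`, strictly unless
`∇f₂(x) = 0` or `Δ + φ = π`. -/
theorem cone_step_increases_f2 {n : ℕ} (f₁ f₂ : EuclideanSpace ℝ (Fin n) → ℝ)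
    (L Δ φ α : ℝ) (x u : EuclideanSpace ℝ (Fin n))
    (hdiff₂ : Differentiable ℝ f₂)
    (hconc₂ : ConcaveOn ℝ Set.univ f₂)
    (hL₂ : ∀ y z : EuclideanSpace ℝ (Fin n), ‖gradient f₂ y - gradient f₂ z‖ ≤ L * ‖y - z‖)
    (hLpos : 0 < L)
    (hg₁ : gradient f₁ x ≠ 0) (hg₂ : gradient f₂ x ≠ 0)
    (hΔ0 : 0 < Δ) (hΔ1 : Δ < π / 2)
    (hφ : φ = angle (gradient f₁ x) (gradient f₂ x))
    (hφ1 : π / 2 - Δ < φ) (hφ2 : φ < π)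
    (hu : u = ((Real.cos Δ / Real.sin φ) * Real.sin (Δ + φ)) •
      (gradient f₂ x + ((‖gradient f₂ x‖ / ‖gradient f₁ x‖) *
        (Real.sin φ * Real.tan Δ - Real.cos φ)) • gradient f₁ x))
    (hα0 : 0 ≤ α) (hα : α ≤ 1 / L) :
    f₂ (x + α • u) ≥ f₂ x + α / 2 * Real.sin (Δ + φ) ^ 2 * ‖gradient f₂ x‖ ^ 2 ∧
    (0 < α → Δ + φ ≠ π → f₂ (x + α • u) > f₂ x) :=
  cone_step_increases_f2_general f₁ f₂ L Δ φ α x u hdiff₂ hL₂ hLpos hg₁ hg₂ hΔ0 hΔ1 hφ hφ1 hφ2 hu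
    hα0 hα
end

section
/- If ∇f₂(x) already lies in the hypercone C_{∇f₁(x)}^Δ (so u = ∇f₂(x)), then f₁(x + α u) ≥ f₁(x) + α ‖∇f₂(x)‖ (sin Δ ‖∇f₁(x)‖ − (Lα/2)‖∇f₂(x)‖); in particular f₁ does not decrease when α ≤ 2 sin Δ ‖∇f₁(x)‖ / (L ‖∇f₂(x)‖). -/
/-!
An `L`-Lipschitz gradient gives the quadratic lower bound
`f (x + v) ≥ f x + ⟪∇f x, v⟫ - L / 2 * ‖v‖²`: the function
`t ↦ f (x + t v) - t ⟪∇f x, v⟫ + L / 2 * t² ‖v‖²` has derivative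
`⟪∇f (x + t v) - ∇f x, v⟫ + L t ‖v‖² ≥ 0` for `t ≥ 0`, so it is monotone on `[0, ∞)`.
Taking `v = α ∇f₂(x)`, the cone condition bounds the linear term below by
`α sin Δ ‖∇f₁(x)‖ ‖∇f₂(x)‖`, and the step-size condition makes the resulting factor nonnegative.
-/

open Real RealInnerProductSpace

section

variable {E : Type*} [NormedAddCommGroup E] [InnerProductSpace ℝ E] [CompleteSpace E]

theorem HasGradientAt.hasDerivAt_comp_add_smul {f : E → ℝ} {g x v : E} {t : ℝ}
    (h : HasGradientAt f g (x + t • v)) :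
    HasDerivAt (fun s : ℝ => f (x + s • v)) ⟪g, v⟫ t := by
  have hline : HasDerivAt (fun s : ℝ => x + s • v) v t := by
    simpa using ((hasDerivAt_id t).smul_const v).const_add x
  simpa [Function.comp_def] using h.hasFDerivAt.comp_hasDerivAt t hline

theorem le_apply_add_of_norm_gradient_sub_le {f : E → ℝ} {L : ℝ} (hf : Differentiable ℝ f)
    (hL : ∀ y z, ‖gradient f y - gradient f z‖ ≤ L * ‖y - z‖) (x v : E) :
    f x + ⟪gradient f x, v⟫ - L / 2 * ‖v‖ ^ 2 ≤ f (x + v) := by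
  set φ : ℝ → ℝ := fun t => f (x + t • v) - t * ⟪gradient f x, v⟫ + L / 2 * t ^ 2 * ‖v‖ ^ 2
  have hφ' : ∀ t, HasDerivAt φ
      (⟪gradient f (x + t • v), v⟫ - ⟪gradient f x, v⟫ + L * t * ‖v‖ ^ 2) t := by
    intro t
    have := (((hf _).hasGradientAt.hasDerivAt_comp_add_smul (x := x) (v := v)).fun_sub
      ((hasDerivAt_id' t).mul_const ⟪gradient f x, v⟫)).fun_add
      (((hasDerivAt_pow 2 t).const_mul (L / 2)).mul_const (‖v‖ ^ 2))
    exact this.congr_deriv (by push_cast; ring)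
  have hφ'_nonneg : ∀ t, 0 ≤ t →
      0 ≤ ⟪gradient f (x + t • v), v⟫ - ⟪gradient f x, v⟫ + L * t * ‖v‖ ^ 2 := by
    intro t ht
    have hlip : ‖gradient f (x + t • v) - gradient f x‖ ≤ L * t * ‖v‖ := by
      simpa [norm_smul, abs_of_nonneg ht, mul_assoc] using hL (x + t • v) x
    have hinner := (abs_le.mp ((abs_real_inner_le_norm _ v).trans
      (mul_le_mul_of_nonneg_right hlip (norm_nonneg v)))).1
    rw [← inner_sub_left]
    linarith
  have hmono : MonotoneOn φ (Set.Ici 0) :=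
    monotoneOn_of_hasDerivWithinAt_nonneg (convex_Ici 0)
      (fun t _ => (hφ' t).continuousAt.continuousWithinAt)
      (fun t _ => (hφ' t).hasDerivWithinAt)
      (fun t ht => hφ'_nonneg t (by simpa using (interior_subset ht : t ∈ Set.Ici (0:ℝ))))
  have hφ01 := hmono Set.self_mem_Ici (Set.mem_Ici.mpr zero_le_one) zero_le_one
  simp only [φ, zero_smul, one_smul, add_zero, zero_mul, sub_zero, one_mul, one_pow,
    ne_eq, OfNat.ofNat_ne_zero, not_false_eq_true, zero_pow] at hφ01
  linarith

end

theorem cone_member_step_preserves_f1_general {n : ℕ} (f₁ f₂ : EuclideanSpace ℝ (Fin n) → ℝ)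
    (L Δ α : ℝ) (x : EuclideanSpace ℝ (Fin n))
    (hdiff₁ : Differentiable ℝ f₁)
    (hL₁ : ∀ y z : EuclideanSpace ℝ (Fin n), ‖gradient f₁ y - gradient f₁ z‖ ≤ L * ‖y - z‖)
    (hLpos : 0 < L) (hg₂ : gradient f₂ x ≠ 0)
    (hcone : ⟪gradient f₁ x, gradient f₂ x⟫ ≥
      Real.sin Δ * ‖gradient f₁ x‖ * ‖gradient f₂ x‖)
    (hα : 0 ≤ α) :
    f₁ (x + α • gradient f₂ x) ≥ f₁ x + α * ‖gradient f₂ x‖ *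
      (Real.sin Δ * ‖gradient f₁ x‖ - L * α / 2 * ‖gradient f₂ x‖) ∧
    (α ≤ 2 * Real.sin Δ * ‖gradient f₁ x‖ / (L * ‖gradient f₂ x‖) →
      f₁ (x + α • gradient f₂ x) ≥ f₁ x) := by
  set u := gradient f₂ x
  have hdescent := le_apply_add_of_norm_gradient_sub_le hdiff₁ hL₁ x (α • u)
  rw [real_inner_smul_right, norm_smul, Real.norm_of_nonneg hα] at hdescent
  have hbound : f₁ (x + α • u) ≥ f₁ x + α * ‖u‖ *
      (Real.sin Δ * ‖gradient f₁ x‖ - L * α / 2 * ‖u‖) := by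
    linarith [mul_le_mul_of_nonneg_left hcone hα]
  refine ⟨hbound, fun hαle => hbound.trans' (le_add_of_nonneg_right ?_)⟩
  have hstep : α * (L * ‖u‖) ≤ 2 * Real.sin Δ * ‖gradient f₁ x‖ :=
    (le_div_iff₀ (mul_pos hLpos (norm_pos_iff.mpr hg₂))).mp hαle
  exact mul_nonneg (mul_nonneg hα (norm_nonneg u)) (by linarith)

/-- If `∇f₂(x)` already lies in the hypercone of `∇f₁(x)` (so `u = ∇f₂(x)`),
then `f₁` does not decrease for a small enough step size. -/
theorem cone_member_step_preserves_f1 {n : ℕ} (f₁ f₂ : EuclideanSpace ℝ (Fin n) → ℝ)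
    (L Δ α : ℝ) (x : EuclideanSpace ℝ (Fin n))
    (hdiff₁ : Differentiable ℝ f₁)
    (hconc₁ : ConcaveOn ℝ Set.univ f₁)
    (hL₁ : ∀ y z : EuclideanSpace ℝ (Fin n), ‖gradient f₁ y - gradient f₁ z‖ ≤ L * ‖y - z‖)
    (hLpos : 0 < L) (hg₂ : gradient f₂ x ≠ 0)
    (hΔ0 : 0 ≤ Δ) (hΔ1 : Δ ≤ π / 2)
    (hcone : ⟪gradient f₁ x, gradient f₂ x⟫ ≥
      Real.sin Δ * ‖gradient f₁ x‖ * ‖gradient f₂ x‖)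
    (hα : 0 ≤ α) :
    f₁ (x + α • gradient f₂ x) ≥ f₁ x + α * ‖gradient f₂ x‖ *
      (Real.sin Δ * ‖gradient f₁ x‖ - L * α / 2 * ‖gradient f₂ x‖) ∧
    (α ≤ 2 * Real.sin Δ * ‖gradient f₁ x‖ / (L * ‖gradient f₂ x‖) →
      f₁ (x + α • gradient f₂ x) ≥ f₁ x) :=
  cone_member_step_preserves_f1_general f₁ f₂ L Δ α x hdiff₁ hL₁ hLpos hg₂ hcone hα
end
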